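/- arXiv:2408.06233 — 2 statements merged into one kernel-verified Lean document; each statement's English description precedes it below -/
import Mathlib

section
/- Let $v$ be a valuation on a field $F$ with values in a totally ordered abelian group $\Gamma$. The rank of $v$, defined as the rank of the abelian group $\mathrm{Im}(v) \subseteq \Gamma$, equals the Krull dimension of the valuation ring $\mathcal{O}_v$. -/
namespace Stmt1Aux

variable {F : Type*} [Field F] {Γ₀ : Type*} [LinearOrderedCommGroupWithZero Γ₀]
  (v : Valuation F Γ₀)

/-- The image of the valuation, as a subgroup of units. -/
abbrev vG : Subgroup Γ₀ˣ := MonoidHom.range (Units.map (v.toMonoidWithZeroHom.toMonoidHom))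

lemma exists_rep (γ : ↥(vG v)) : ∃ x : Fˣ, v (x : F) = ((γ : Γ₀ˣ) : Γ₀) := by
  obtain ⟨x, hx⟩ := γ.2
  exact ⟨x, congrArg Units.val hx⟩

/-- The overring of `𝒪_v` associated to a subgroup of the value group. -/
def toRing (H : Subgroup ↥(vG v)) : ValuationSubring F where
  carrier := {x | ∃ h ∈ H, v x ≤ ((h : Γ₀ˣ) : Γ₀)}
  one_mem' := ⟨1, one_mem H, by simp⟩
  zero_mem' := ⟨1, one_mem H, by simp⟩
  mul_mem' := by
    rintro x y ⟨h₁, hh₁, hx⟩ ⟨h₂, hh₂, hy⟩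
    exact ⟨h₁ * h₂, mul_mem hh₁ hh₂, by
      rw [map_mul]; exact mul_le_mul' hx hy⟩
  add_mem' := by
    rintro x y ⟨h₁, hh₁, hx⟩ ⟨h₂, hh₂, hy⟩
    rcases le_total ((h₁ : Γ₀ˣ) : Γ₀) ((h₂ : Γ₀ˣ) : Γ₀) with hle | hle
    · exact ⟨h₂, hh₂, le_trans (v.map_add x y) (max_le (hx.trans hle) hy)⟩
    · exact ⟨h₁, hh₁, le_trans (v.map_add x y) (max_le hx (hy.trans hle))⟩
  neg_mem' := by
    rintro x ⟨h, hh, hx⟩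
    exact ⟨h, hh, by rwa [Valuation.map_neg]⟩
  mem_or_inv_mem' := by
    intro x
    rcases le_total (v x) 1 with h | h
    · exact Or.inl ⟨1, one_mem H, by simpa using h⟩
    · refine Or.inr ⟨1, one_mem H, ?_⟩
      rcases eq_or_ne x 0 with rfl | hx
      · simp
      · rw [map_inv₀]
        simpa using inv_le_one_of_one_le₀ h

/-- The subgroup of the value group associated to an overring of `𝒪_v`. -/
def toGrp (S : ValuationSubring F) : Subgroup ↥(vG v) where
  carrier := {γ | ∃ x : F, x ∈ S ∧ x⁻¹ ∈ S ∧ v x = ((γ : Γ₀ˣ) : Γ₀)}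
  one_mem' := ⟨1, one_mem S, by simpa using one_mem S, by simp⟩
  mul_mem' := by
    rintro γ₁ γ₂ ⟨x, hx, hx', hvx⟩ ⟨y, hy, hy', hvy⟩
    refine ⟨x * y, mul_mem hx hy, ?_, ?_⟩
    · rw [mul_inv]; exact mul_mem hx' hy'
    · rw [map_mul, hvx, hvy]; rfl
  inv_mem' := by
    rintro γ ⟨x, hx, hx', hvx⟩
    refine ⟨x⁻¹, hx', by simpa using hx, ?_⟩
    rw [map_inv₀, hvx]
    exact (Units.val_inv_eq_inv_val _).symm

lemma val_ne_zero (γ : ↥(vG v)) : (((γ : Γ₀ˣ) : Γ₀)) ≠ 0 := Units.ne_zero _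

lemma mem_valuationSubring_of_le {x : F} (S : ValuationSubring F)
    (hS : v.valuationSubring ≤ S) {y : F} (hy : y ∈ S) (hy0 : v y ≠ 0)
    (h : v x ≤ v y) : x ∈ S := by
  have hyne : y ≠ 0 := by
    intro h0; apply hy0; rw [h0]; simp
  have : x * y⁻¹ ∈ v.valuationSubring := by
    rw [Valuation.mem_valuationSubring_iff, map_mul, map_inv₀]
    rw [mul_inv_le_iff₀ (zero_lt_iff.mpr hy0), one_mul]
    exact h
  have hx : x = x * y⁻¹ * y := by field_simp
  rw [hx]
  exact mul_mem (hS this) hy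

lemma toGrp_convex (S : ValuationSubring F) (hS : v.valuationSubring ≤ S) :
    ∀ a b c : ↥(vG v), a ∈ toGrp v S → b ∈ toGrp v S → a ≤ c → c ≤ b →
      c ∈ toGrp v S := by
  rintro a b c ⟨x, hx, hx', hvx⟩ ⟨y, hy, hy', hvy⟩ hac hcb
  obtain ⟨z, hz⟩ := exists_rep v c
  have hac' : ((a : Γ₀ˣ) : Γ₀) ≤ ((c : Γ₀ˣ) : Γ₀) := by exact_mod_cast hac
  have hcb' : ((c : Γ₀ˣ) : Γ₀) ≤ ((b : Γ₀ˣ) : Γ₀) := by exact_mod_cast hcb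
  refine ⟨(z : F), ?_, ?_, hz⟩
  · refine mem_valuationSubring_of_le v S hS hy ?_ ?_
    · rw [hvy]; exact val_ne_zero v b
    · rw [hvy, hz]; exact hcb'
  · refine mem_valuationSubring_of_le v S hS hx' ?_ ?_
    · rw [map_inv₀, hvx]
      exact inv_ne_zero (val_ne_zero v a)
    · rw [map_inv₀, map_inv₀, hvx, hz]
      exact (inv_le_inv₀ (zero_lt_iff.mpr (val_ne_zero v c)) (zero_lt_iff.mpr (val_ne_zero v a))).mpr hac'

lemma le_toRing (H : Subgroup ↥(vG v)) : v.valuationSubring ≤ toRing v H := by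
  intro x hx
  exact ⟨1, one_mem H, by simpa using hx⟩

lemma toGrp_toRing (H : {H : Subgroup ↥(vG v) //
    ∀ a b c : ↥(vG v), a ∈ H → b ∈ H → a ≤ c → c ≤ b → c ∈ H}) :
    toGrp v (toRing v H.1) = H.1 := by
  ext γ
  constructor
  · rintro ⟨x, ⟨h₁, hh₁, hx₁⟩, ⟨h₂, hh₂, hx₂⟩, hvx⟩
    have hx0 : v x ≠ 0 := by rw [hvx]; exact val_ne_zero v γ
    refine H.2 h₂⁻¹ h₁ γ (inv_mem hh₂) hh₁ ?_ ?_
    · have h2 : (((h₂ : Γ₀ˣ) : Γ₀))⁻¹ ≤ ((γ : Γ₀ˣ) : Γ₀) := by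
        rw [map_inv₀] at hx₂
        rw [← hvx]
        exact (inv_le_comm₀ (zero_lt_iff.mpr (val_ne_zero v h₂))
          (zero_lt_iff.mpr hx0)).mpr hx₂
      have h3 : (((h₂⁻¹ : ↥(vG v)) : Γ₀ˣ) : Γ₀) ≤ ((γ : Γ₀ˣ) : Γ₀) := by
        rw [show (((h₂⁻¹ : ↥(vG v)) : Γ₀ˣ) : Γ₀) = (((h₂ : Γ₀ˣ) : Γ₀))⁻¹ from
          Units.val_inv_eq_inv_val _]
        exact h2
      exact_mod_cast h3
    · have : (((γ : Γ₀ˣ)) : Γ₀) ≤ (((h₁ : ↥(vG v)) : Γ₀ˣ) : Γ₀) := by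
        rw [← hvx]; exact hx₁
      exact_mod_cast this
  · intro hγ
    obtain ⟨x, hx⟩ := exists_rep v γ
    have hx0 : (x : F) ≠ 0 := x.ne_zero
    refine ⟨(x : F), ⟨γ, hγ, le_of_eq hx⟩, ⟨γ⁻¹, inv_mem hγ, ?_⟩, hx⟩
    rw [map_inv₀, hx]
    exact le_of_eq (Units.val_inv_eq_inv_val _).symm

lemma toRing_toGrp (S : ValuationSubring F) (hS : v.valuationSubring ≤ S) :
    toRing v (toGrp v S) = S := by
  ext x
  constructor
  · rintro ⟨h, ⟨y, hy, hy', hvy⟩, hx⟩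
    refine mem_valuationSubring_of_le v S hS hy ?_ ?_
    · rw [hvy]; exact val_ne_zero v h
    · rw [hvy]; exact hx
  · intro hx
    rcases le_total (v x) 1 with h | h
    · exact le_toRing v _ (by rwa [Valuation.mem_valuationSubring_iff])
    · have hx0 : x ≠ 0 := by
        intro h0; rw [h0] at h; simp at h
      have hxinv : x⁻¹ ∈ S := by
        apply hS
        rw [Valuation.mem_valuationSubring_iff, map_inv₀]
        exact inv_le_one_of_one_le₀ h
      set u : Γ₀ˣ := Units.map (v.toMonoidWithZeroHom.toMonoidHom) (Units.mk0 x hx0)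
      have hu : (u : Γ₀) = v x := rfl
      refine ⟨⟨u, ⟨Units.mk0 x hx0, rfl⟩⟩, ⟨x, hx, hxinv, hu.symm⟩, le_of_eq hu.symm⟩

/-- The order isomorphism between overrings of `𝒪_v` and convex subgroups of the image. -/
noncomputable def overringIso :
    {S : ValuationSubring F // v.valuationSubring ≤ S} ≃o
    {H : Subgroup ↥(vG v) //
        ∀ a b c : ↥(vG v), a ∈ H → b ∈ H → a ≤ c → c ≤ b → c ∈ H} where
  toFun S := ⟨toGrp v S.1, toGrp_convex v S.1 S.2⟩
  invFun H := ⟨toRing v H.1, le_toRing v H.1⟩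
  left_inv S := Subtype.ext (toRing_toGrp v S.1 S.2)
  right_inv H := Subtype.ext (toGrp_toRing v H)
  map_rel_iff' := by
    intro S T
    constructor
    · intro h
      have h1 : toRing v (toGrp v S.1) ≤ toRing v (toGrp v T.1) := by
        rintro x ⟨γ, hγ, hx⟩
        exact ⟨γ, h hγ, hx⟩
      rwa [toRing_toGrp v S.1 S.2, toRing_toGrp v T.1 T.2] at h1
    · intro h
      rintro γ ⟨x, hx, hx', hvx⟩
      exact ⟨x, h hx, h hx', hvx⟩

end Stmt1Aux

/-- For a valuation `v` on a field `F` (valued in a linearly ordered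
commutative group with zero), the rank of `v` — the Krull dimension of the ordered chain of
convex subgroups of the image group `Im(v) ⊆ Γ₀ˣ` — equals the Krull dimension of the
valuation ring `𝒪_v`. -/
theorem stmt_1 {F : Type*} [Field F] {Γ₀ : Type*} [LinearOrderedCommGroupWithZero Γ₀]
    (v : Valuation F Γ₀)
    (ImG : Subgroup Γ₀ˣ)
    (hImG : ImG = MonoidHom.range (Units.map (v.toMonoidWithZeroHom.toMonoidHom))) :
    ringKrullDim ↥v.valuationSubring =
      Order.krullDim {H : Subgroup ↥ImG //
        ∀ a b c : ↥ImG, a ∈ H → b ∈ H → a ≤ c → c ≤ b → c ∈ H} := by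
  subst hImG
  rw [ringKrullDim, ← Order.krullDim_orderDual,
    Order.krullDim_eq_of_orderIso
      ((ValuationSubring.primeSpectrumOrderEquiv v.valuationSubring).trans
        (Stmt1Aux.overringIso v))]
end

section
/- Let $v$ be a valuation on a field $F$, with valuation ring $\mathcal{O}_v$, maximal ideal $\mathcal{M}_v$ and residue field $\kappa_v$. Define $K^M_*(v) = K^M_*(F)/I$ where $I$ is the graded ideal generated by symbols $\{u\}$ with $u \in 1+\mathcal{M}_v$. Then there is a unique graded ring homomorphism $i : K^M_*(\kappa_v) \to K^M_*(v)$ such that for all units $u_1, \dots, u_n \in \mathcal{O}_v^\times$, $i(\{\bar u_1, \dots, \bar u_n\})$ equals the class of $\{u_1, \dots, u_n\}$ in $K^M_*(v)$. -/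
/-- The subgroup of relations defining Milnor K-theory: multilinearity and the Steinberg
relation. -/
def milnorRel (n : ℕ) (K : Type) [CommRing K] :
    AddSubgroup (FreeAbelianGroup (Fin n → Kˣ)) :=
  AddSubgroup.closure
    ({x | ∃ (u : Fin n → Kˣ) (i : Fin n) (s t : Kˣ), u i = s * t ∧
        x = FreeAbelianGroup.of u - FreeAbelianGroup.of (Function.update u i s) -
          FreeAbelianGroup.of (Function.update u i t)} ∪
     {x | ∃ (u : Fin n → Kˣ) (i j : Fin n), i ≠ j ∧ ((u i : K) + (u j : K) = 1) ∧
        x = FreeAbelianGroup.of u})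

/-- The `n`-th Milnor K-group of `K`. -/
def MilnorK (n : ℕ) (K : Type) [CommRing K] : Type :=
  FreeAbelianGroup (Fin n → Kˣ) ⧸ milnorRel n K

instance (n : ℕ) (K : Type) [CommRing K] : AddCommGroup (MilnorK n K) :=
  QuotientAddGroup.Quotient.addCommGroup _

/-- The symbol `{u 0, …, u (n-1)}` in Milnor K-theory. -/
def MilnorK.symbol {n : ℕ} {K : Type} [CommRing K] (u : Fin n → Kˣ) : MilnorK n K :=
  QuotientAddGroup.mk (FreeAbelianGroup.of u)

/-- The degree-`n` part of the graded ideal of `K^M_*(F)` generated by the symbols `{u}`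
with `u ∈ 1 + 𝓜_v`: the subgroup generated by symbols with an entry in `1 + 𝓜_v`. -/
def milnorValRel (n : ℕ) (F : Type) [Field F] (A : ValuationSubring F) :
    AddSubgroup (MilnorK n F) :=
  AddSubgroup.closure
    {x | ∃ u : Fin n → Fˣ, (∃ i : Fin n, ∃ m ∈ IsLocalRing.maximalIdeal ↥A,
      (u i : F) = 1 + (m : ↥A)) ∧ x = MilnorK.symbol u}

/-- Milnor K-theory of a valuation: `K^M_*(v) = K^M_*(F)/(1 + 𝓜_v)`. -/
def MilnorKv (n : ℕ) (F : Type) [Field F] (A : ValuationSubring F) : Type :=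
  MilnorK n F ⧸ milnorValRel n F A

instance (n : ℕ) (F : Type) [Field F] (A : ValuationSubring F) :
    AddCommGroup (MilnorKv n F A) :=
  QuotientAddGroup.Quotient.addCommGroup _

/-!
Units of `𝒪_v` have residues in `κ_v^×`, and every residue unit lifts. The symbol of a tuple of
units of `𝒪_v` in `K^M_*(v)` depends only on the residues of its entries: replacing one entry
`a` by `b` with `b̄ = ā` changes the symbol by the symbol with entry `a⁻¹b ∈ 1 + 𝓜_v`, which
vanishes in `K^M_*(v)`. Sending `{ū₁, …, ūₙ}` to the class of `{u₁, …, uₙ}` is therefore well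
defined on tuples, and it respects multilinearity and the Steinberg relation because both can
be checked after lifting: if `ū + w̄ = 1` then `w` may be replaced by the unit `1 - u`.
Uniqueness holds because symbols generate `K^M_n(κ_v)`.
-/

open IsLocalRing Function

theorem Function.apply_eq_apply_of_update_congr {ι α β γ : Type*} [Fintype ι] [DecidableEq ι]
    {f : (ι → α) → β} (g : α → γ)
    (hf : ∀ (w : ι → α) (i : ι) (a b : α), g a = g b → f (update w i a) = f (update w i b))
    {u v : ι → α} (huv : ∀ i, g (u i) = g (v i)) : f u = f v := by
  suffices h : ∀ s : Finset ι, f (s.piecewise v u) = f u by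
    simpa using (h Finset.univ).symm
  intro s
  induction s using Finset.induction_on with
  | empty => simp
  | insert i s hi ih =>
    rw [Finset.piecewise_insert, ← hf _ i _ _ (huv i), ← Finset.piecewise_eq_of_notMem s v u hi,
      update_eq_self, ih]

theorem IsLocalRing.units_map_residue_surjective (R : Type*) [CommRing R] [IsLocalRing R] :
    Surjective (Units.map (residue R).toMonoidHom) :=
  surjective_units_map_of_local_ringHom _ residue_surjective inferInstance

theorem IsLocalRing.residue_surjInv_units_map {R : Type*} [CommRing R] [IsLocalRing R]
    (x : (ResidueField R)ˣ) :
    residue R ((surjInv (units_map_residue_surjective R) x : Rˣ) : R) = x :=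
  congrArg Units.val (surjInv_eq (units_map_residue_surjective R) x)

namespace MilnorK

variable {n : ℕ} {K : Type} [CommRing K]

theorem symbol_update_mul (u : Fin n → Kˣ) (i : Fin n) (s t : Kˣ) :
    symbol (update u i (s * t)) = symbol (update u i s) + symbol (update u i t) := by
  have hrel : FreeAbelianGroup.of (update u i (s * t)) - FreeAbelianGroup.of (update u i s) -
      FreeAbelianGroup.of (update u i t) ∈ milnorRel n K :=
    AddSubgroup.subset_closure <| Or.inl
      ⟨update u i (s * t), i, s, t, update_self .., by rw [update_idem, update_idem]⟩
  have h : symbol (update u i (s * t)) - symbol (update u i s) - symbol (update u i t) = 0 :=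
    (QuotientAddGroup.eq_zero_iff _).mpr hrel
  rwa [sub_sub, sub_eq_zero] at h

theorem symbol_eq_zero_of_add_eq_one {u : Fin n → Kˣ} {i j : Fin n} (hij : i ≠ j)
    (h : (u i : K) + u j = 1) : symbol u = 0 :=
  (QuotientAddGroup.eq_zero_iff _).mpr <|
    AddSubgroup.subset_closure <| Or.inr ⟨u, i, j, hij, h, rfl⟩

variable {G : Type*} [AddCommGroup G]

def lift (f : (Fin n → Kˣ) → G)
    (hmul : ∀ u i s t, f (update u i (s * t)) = f (update u i s) + f (update u i t))
    (hsteinberg : ∀ (u : Fin n → Kˣ) i j, i ≠ j → (u i : K) + u j = 1 → f u = 0) :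
    MilnorK n K →+ G :=
  QuotientAddGroup.lift _ (FreeAbelianGroup.lift f) <| by
    rw [milnorRel, AddSubgroup.closure_le]
    rintro x (⟨u, i, s, t, hst, rfl⟩ | ⟨u, i, j, hij, hsum, rfl⟩)
    · have hu : u = update u i (s * t) := by rw [← hst, update_eq_self]
      simp only [SetLike.mem_coe, AddMonoidHom.mem_ker, map_sub, FreeAbelianGroup.lift_apply_of]
      rw [hu, hmul, update_idem, update_idem]
      abel
    · exact (FreeAbelianGroup.lift_apply_of f u).trans (hsteinberg u i j hij hsum)

theorem lift_symbol (f : (Fin n → Kˣ) → G) hmul hsteinberg (u : Fin n → Kˣ) :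
    lift f hmul hsteinberg (symbol u) = f u :=
  FreeAbelianGroup.lift_apply_of f u

theorem addMonoidHom_ext {φ ψ : MilnorK n K →+ G} (h : ∀ u, φ (symbol u) = ψ (symbol u)) :
    φ = ψ :=
  QuotientAddGroup.addMonoidHom_ext _ <| FreeAbelianGroup.lift_ext _ _ h

end MilnorK

namespace MilnorKv

variable {F : Type} [Field F] {A : ValuationSubring F} {n : ℕ}

def unitSymbol (u : Fin n → Aˣ) : MilnorKv n F A :=
  QuotientAddGroup.mk (MilnorK.symbol (Units.map A.subtype.toMonoidHom ∘ u))

theorem unitSymbol_update_mul (u : Fin n → Aˣ) (i : Fin n) (s t : Aˣ) :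
    unitSymbol (update u i (s * t)) = unitSymbol (update u i s) + unitSymbol (update u i t) := by
  simp only [unitSymbol, comp_update, map_mul, MilnorK.symbol_update_mul, QuotientAddGroup.mk_add]
  rfl

theorem unitSymbol_eq_zero_of_residue_eq_one {u : Fin n → Aˣ} {i : Fin n}
    (h : residue A (u i) = 1) : unitSymbol u = 0 := by
  refine (QuotientAddGroup.eq_zero_iff _).mpr <|
    AddSubgroup.subset_closure ⟨_, ⟨i, u i - 1, ?_, ?_⟩, rfl⟩
  · rw [← residue_eq_zero_iff, map_sub, h, map_one, sub_self]
  · simp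

theorem unitSymbol_update_congr (u : Fin n → Aˣ) (i : Fin n) {a b : Aˣ}
    (h : residue A a = residue A b) : unitSymbol (update u i a) = unitSymbol (update u i b) := by
  have hres : residue A ↑(a⁻¹ * b) = 1 := by
    rw [Units.val_mul, map_mul, ← h, ← map_mul, Units.inv_mul, map_one]
  rw [← mul_inv_cancel_left a b, unitSymbol_update_mul,
    unitSymbol_eq_zero_of_residue_eq_one (u := update u i (a⁻¹ * b)) (i := i)
      (by rwa [update_self]), add_zero]

theorem unitSymbol_congr {u v : Fin n → Aˣ} (h : ∀ j, residue A (u j) = residue A (v j)) :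
    unitSymbol u = unitSymbol v :=
  apply_eq_apply_of_update_congr (fun a : Aˣ => residue A a)
    (fun w i _ _ hab => unitSymbol_update_congr w i hab) h

theorem unitSymbol_eq_zero_of_residue_add_eq_one {u : Fin n → Aˣ} {i j : Fin n} (hij : i ≠ j)
    (h : residue A (u i) + residue A (u j) = 1) : unitSymbol u = 0 := by
  have hres : residue A (1 - u i) = residue A (u j) := by
    rw [map_sub, map_one, ← h, add_sub_cancel_left]
  have hunit : IsUnit (1 - (u i : A)) := by
    rw [← residue_ne_zero_iff_isUnit, hres, residue_ne_zero_iff_isUnit]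
    exact (u j).isUnit
  rw [← update_eq_self j u, unitSymbol_update_congr u j (b := hunit.unit) (by simp [hres])]
  exact congrArg _ <| MilnorK.symbol_eq_zero_of_add_eq_one hij <| by
    simp [update_of_ne hij]

variable (A) in
noncomputable def ofResidue (n : ℕ) : MilnorK n (ResidueField A) →+ MilnorKv n F A :=
  MilnorK.lift (fun u => unitSymbol (surjInv (units_map_residue_surjective A) ∘ u))
    (fun u i s t => by
      simp only [comp_update, ← unitSymbol_update_mul]
      refine unitSymbol_update_congr _ _ ?_
      rw [Units.val_mul, map_mul, residue_surjInv_units_map, residue_surjInv_units_map,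
        residue_surjInv_units_map, Units.val_mul])
    (fun u i j hij h => unitSymbol_eq_zero_of_residue_add_eq_one hij
      (by rwa [comp_apply, comp_apply, residue_surjInv_units_map, residue_surjInv_units_map]))

theorem ofResidue_symbol_map (u : Fin n → Aˣ) :
    ofResidue A n (MilnorK.symbol (Units.map (residue A).toMonoidHom ∘ u)) = unitSymbol u :=
  (MilnorK.lift_symbol ..).trans <| unitSymbol_congr fun j => by
    rw [comp_apply, residue_surjInv_units_map]
    rfl

end MilnorKv

/-- Let `v` be a valuation on a field `F` with valuation ring `𝒪_v = A`,
maximal ideal `𝓜_v` and residue field `κ_v`. Let `K^M_*(v) = K^M_*(F)/I`, where `I` is the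
graded ideal generated by symbols `{u}` with `u ∈ 1 + 𝓜_v`. Then there is a unique (graded)
family of homomorphisms `i : K^M_n(κ_v) → K^M_n(v)` sending, for units `u₁, …, uₙ ∈ 𝒪_v^×`,
the symbol `{ū₁, …, ūₙ}` to the class of `{u₁, …, uₙ}` in `K^M_n(v)`.  (Since symbols
generate and multiply by concatenation, this is exactly the unique graded ring homomorphism
of the statement.) -/
theorem stmt_9 (F : Type) [Field F] (A : ValuationSubring F) :
    ∃! i : ∀ n : ℕ, MilnorK n (IsLocalRing.ResidueField ↥A) →+ MilnorKv n F A,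
      ∀ (n : ℕ) (u : Fin n → (↥A)ˣ),
        i n (MilnorK.symbol (fun j => Units.map (IsLocalRing.residue ↥A).toMonoidHom (u j))) =
          QuotientAddGroup.mk
            (MilnorK.symbol (fun j => Units.map A.subtype.toMonoidHom (u j))) := by
  refine ⟨MilnorKv.ofResidue A, fun n u => MilnorKv.ofResidue_symbol_map u, fun i hi => ?_⟩
  funext n
  refine MilnorK.addMonoidHom_ext fun w => ?_
  obtain ⟨u, rfl⟩ := (units_map_residue_surjective A).comp_left w
  exact (hi n u).trans (MilnorKv.ofResidue_symbol_map u).symm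
end
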